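/- Define the singular value function φ^s(L^r) = (α₁^{(r)})^s for 0 < s ≤ 1 and φ^s(L^r) = α₁^{(r)}·(α₂^{(r)})^{s-1} for 1 < s ≤ 2, where α₁^{(r)} ≥ α₂^{(r)} are the singular values of L^r with L = [[1/2,0],[−1/2,1/2]]. Then the series Σ_{r≥1} 2^r·φ^s(L^r) converges if and only if s > 1. Consequently inf{s > 0 : Σ_{r≥1} 2^r φ^s(L^r) < ∞} = 1. -/

import Mathlib

/-!
The singular values satisfy `2^{-r} ≤ α₁^{(r)} ≤ (r + 2) 2^{-r}` and `α₂^{(r)} ≤ 2^{-r}`. For `s ≤ 1` this gives `2^r φ^s(L^r) ≥ 2^r (2^{-r})^s ≥ 1`, so the terms do not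
tend to zero. For `s > 1` it gives `2^r φ^s(L^r) ≤ (r + 2) (2^{1-s})^r`, an arithmetico-geometric
series. Hence the set of admissible `s` is `(1, ∞)`, whose infimum is `1`.
-/

open Real

/-- Larger singular value of `L^r`. -/
noncomputable def alpha1 (r : ℕ) : ℝ :=
  (1 / 2 : ℝ) ^ r * Real.sqrt (((r : ℝ) ^ 2 + 2 + Real.sqrt ((r : ℝ) ^ 4 + 4 * (r : ℝ) ^ 2)) / 2)

/-- Smaller singular value of `L^r`. -/
noncomputable def alpha2 (r : ℕ) : ℝ :=
  (1 / 2 : ℝ) ^ r * Real.sqrt (((r : ℝ) ^ 2 + 2 - Real.sqrt ((r : ℝ) ^ 4 + 4 * (r : ℝ) ^ 2)) / 2)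

/-- Singular value function `φ^s(L^r)`. -/
noncomputable def phiSV (s : ℝ) (r : ℕ) : ℝ :=
  if s ≤ 1 then alpha1 r ^ s else alpha1 r * alpha2 r ^ (s - 1)

lemma sqrt_quartic_le (x : ℝ) : √(x ^ 4 + 4 * x ^ 2) ≤ x ^ 2 + 2 :=
  Real.sqrt_le_iff.mpr ⟨by positivity, by nlinarith⟩

lemma sq_le_sqrt_quartic (x : ℝ) : x ^ 2 ≤ √(x ^ 4 + 4 * x ^ 2) :=
  Real.le_sqrt_of_sq_le (by nlinarith [sq_nonneg x])

lemma half_pow_le_alpha1 (n : ℕ) : (1 / 2 : ℝ) ^ n ≤ alpha1 n := by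
  refine le_mul_of_one_le_right (by positivity) (Real.one_le_sqrt.mpr ?_)
  have := Real.sqrt_nonneg ((n : ℝ) ^ 4 + 4 * (n : ℝ) ^ 2)
  nlinarith [sq_nonneg (n : ℝ)]

lemma alpha1_le (n : ℕ) : alpha1 n ≤ (1 / 2 : ℝ) ^ n * (n + 2) := by
  refine mul_le_mul_of_nonneg_left (Real.sqrt_le_iff.mpr ⟨by positivity, ?_⟩) (by positivity)
  nlinarith [sqrt_quartic_le (n : ℝ), Nat.cast_nonneg (α := ℝ) n]

lemma alpha2_nonneg (n : ℕ) : 0 ≤ alpha2 n := by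
  unfold alpha2
  positivity

lemma alpha2_le_half_pow (n : ℕ) : alpha2 n ≤ (1 / 2 : ℝ) ^ n := by
  refine mul_le_of_le_one_right (by positivity) (Real.sqrt_le_one.mpr ?_)
  linarith [sq_le_sqrt_quartic (n : ℝ)]

lemma phiSV_nonneg (s : ℝ) (n : ℕ) : 0 ≤ phiSV s n := by
  have alpha1_nonneg : 0 ≤ alpha1 n := (half_pow_le_alpha1 n).trans' (by positivity)
  unfold phiSV
  split_ifs
  · positivity
  · exact mul_nonneg alpha1_nonneg (Real.rpow_nonneg (alpha2_nonneg n) _)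

lemma one_le_two_pow_mul_phiSV {s : ℝ} (hs0 : 0 < s) (hs1 : s ≤ 1) (n : ℕ) :
    1 ≤ (2 : ℝ) ^ n * phiSV s n := by
  have half_pow_le_phiSV : (1 / 2 : ℝ) ^ n ≤ phiSV s n := by
    rw [phiSV, if_pos hs1]
    calc (1 / 2 : ℝ) ^ n ≤ ((1 / 2 : ℝ) ^ n) ^ s :=
          Real.self_le_rpow_of_le_one (by positivity) (pow_le_one₀ (by norm_num) (by norm_num)) hs1
      _ ≤ alpha1 n ^ s := Real.rpow_le_rpow (by positivity) (half_pow_le_alpha1 n) hs0.le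
  calc (1 : ℝ) = 2 ^ n * (1 / 2) ^ n := by rw [← mul_pow]; norm_num
    _ ≤ 2 ^ n * phiSV s n := by gcongr

lemma two_pow_mul_phiSV_le {s : ℝ} (hs : 1 < s) (n : ℕ) :
    (2 : ℝ) ^ n * phiSV s n ≤ (n + 2) * ((1 / 2 : ℝ) ^ (s - 1)) ^ n := by
  have alpha2_rpow_le : alpha2 n ^ (s - 1) ≤ ((1 / 2 : ℝ) ^ (s - 1)) ^ n := by
    rw [← Real.rpow_natCast, ← Real.rpow_mul (by norm_num), mul_comm, Real.rpow_mul (by norm_num),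
      Real.rpow_natCast]
    exact Real.rpow_le_rpow (alpha2_nonneg n) (alpha2_le_half_pow n) (by linarith)
  rw [phiSV, if_neg hs.not_ge]
  calc (2 : ℝ) ^ n * (alpha1 n * alpha2 n ^ (s - 1))
      ≤ 2 ^ n * ((1 / 2) ^ n * (n + 2) * ((1 / 2 : ℝ) ^ (s - 1)) ^ n) := by
        gcongr
        · exact Real.rpow_nonneg (alpha2_nonneg n) _
        · exact alpha1_le n
    _ = (2 ^ n * (1 / 2) ^ n) * ((n + 2) * ((1 / 2 : ℝ) ^ (s - 1)) ^ n) := by ring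
    _ = (n + 2) * ((1 / 2 : ℝ) ^ (s - 1)) ^ n := by rw [← mul_pow]; norm_num

lemma summable_add_two_mul_geometric {c : ℝ} (hc0 : 0 ≤ c) (hc1 : c < 1) :
    Summable (fun n : ℕ => ((n : ℝ) + 2) * c ^ n) := by
  have hc : ‖c‖ < 1 := by rwa [Real.norm_of_nonneg hc0]
  refine ((summable_pow_mul_geometric_of_norm_lt_one 1 hc).add
    ((summable_geometric_of_lt_one hc0 hc1).mul_left 2)).congr fun n => ?_
  simp only [pow_one]
  ring

lemma summable_two_pow_mul_phiSV_iff {s : ℝ} (hs0 : 0 < s) :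
    Summable (fun n : ℕ => (2 : ℝ) ^ n * phiSV s n) ↔ 1 < s := by
  refine ⟨fun hsum => not_le.mp fun hs1 => ?_, fun hs => ?_⟩
  · have := ge_of_tendsto hsum.tendsto_atTop_zero
      (Filter.Eventually.of_forall (one_le_two_pow_mul_phiSV hs0 hs1))
    norm_num at this
  · refine Summable.of_nonneg_of_le (fun n => mul_nonneg (by positivity) (phiSV_nonneg s n))
      (two_pow_mul_phiSV_le hs) (summable_add_two_mul_geometric (by positivity) ?_)
    exact Real.rpow_lt_one (by norm_num) (by norm_num) (by linarith)

/-- `Σ_{r≥1} 2^r φ^s(L^r)` converges iff `s > 1`, hence the affinity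
dimension `inf{s > 0 : Σ_{r≥1} 2^r φ^s(L^r) < ∞}` equals `1`. -/
theorem affinity_dimension_eq_one :
    (∀ s : ℝ, 0 < s → s ≤ 2 →
      (Summable (fun r : ℕ => (2 : ℝ) ^ (r + 1) * phiSV s (r + 1)) ↔ 1 < s)) ∧
    sInf {s : ℝ | 0 < s ∧ Summable (fun r : ℕ => (2 : ℝ) ^ (r + 1) * phiSV s (r + 1))} = 1 := by
  have summable_iff {s : ℝ} (hs0 : 0 < s) :
      Summable (fun r : ℕ => (2 : ℝ) ^ (r + 1) * phiSV s (r + 1)) ↔ 1 < s :=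
    (summable_nat_add_iff 1).trans (summable_two_pow_mul_phiSV_iff hs0)
  refine ⟨fun s hs0 _ => summable_iff hs0, ?_⟩
  have admissible_eq : {s : ℝ | 0 < s ∧ Summable (fun r : ℕ => (2 : ℝ) ^ (r + 1) * phiSV s (r + 1))}
      = Set.Ioi 1 := by
    ext s
    refine ⟨fun ⟨hs0, hsum⟩ => (summable_iff hs0).mp hsum, fun hs => ?_⟩
    have hs0 : 0 < s := zero_lt_one.trans hs
    exact ⟨hs0, (summable_iff hs0).mpr hs⟩
  rw [admissible_eq, csInf_Ioi]
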